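/- In the setting below, the map sending w = u + vτ (with u, v ∈ ℤ) to the pair (u, v) is a well-defined injection from the set counted by N_ω(q, t) into the set counted by M(q, kt); in particular N_ω(q, t) ≤ M(q, kt) for every positive real t and every positive integer q all of whose prime factors lie in P. -/

import Mathlib

open NumberField
open scoped TensorProduct

instance (p : Nat.Primes) : Fact (p : ℕ).Prime := ⟨p.2⟩

variable (K : IntermediateField ℚ ℂ) [NumberField ↥K]

/-- `O_p = O ⊗_ℤ ℤ_p`. -/
abbrev Op (p : Nat.Primes) : Type _ := (𝓞 ↥K) ⊗[ℤ] ℤ_[(p : ℕ)]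

/-- The natural map `O → O_p`. -/
noncomputable def incL (p : Nat.Primes) : 𝓞 ↥K →+* Op K p :=
  (Algebra.TensorProduct.includeLeft :
    𝓞 ↥K →ₐ[ℤ] (𝓞 ↥K) ⊗[ℤ] ℤ_[(p : ℕ)]).toRingHom

/-- The natural map `ℤ_p → O_p`. -/
noncomputable def incR (p : Nat.Primes) : ℤ_[(p : ℕ)] →+* Op K p :=
  (Algebra.TensorProduct.includeRight :
    ℤ_[(p : ℕ)] →ₐ[ℤ] (𝓞 ↥K) ⊗[ℤ] ℤ_[(p : ℕ)]).toRingHom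

/-- `ℤ_pˣ` regarded as a subgroup of `O_pˣ`. -/
noncomputable def ZpUnits (p : Nat.Primes) : Subgroup (Op K p)ˣ :=
  (Units.map (incR K p).toMonoidHom).range

/-- `H_p = {a ∈ O_pˣ : a^m ∈ ℤ_pˣ for some positive integer m}`. -/
noncomputable def Hp (p : Nat.Primes) : Set (Op K p)ˣ :=
  {a : (Op K p)ˣ | ∃ m : ℕ, 0 < m ∧ a ^ m ∈ ZpUnits K p}

/-- The set counted by `N_ω(q, t)`: elements `w ∈ O` with
`w ≡ η_p ω_p x_p (mod q O_p)` for some `η_p ∈ ℤ_pˣ` (for every `p ∈ P`, where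
`y p = ω_p x_p`), with `w^h w₀ O ≠ conj(w^h w₀) O`, and `|w| ≤ t`. -/
noncomputable def NSet (P : Finset Nat.Primes) (h : ℕ) (w₀ : 𝓞 ↥K)
    (σ : 𝓞 ↥K ≃+* 𝓞 ↥K) (y : (p : Nat.Primes) → (Op K p)ˣ)
    (q : ℕ) (t : ℝ) : Set (𝓞 ↥K) :=
  {w : 𝓞 ↥K |
    (∀ p ∈ P, ∃ η : ℤ_[(p : ℕ)]ˣ,
      (q : Op K p) ∣
        (incL K p w - ((Units.map (incR K p).toMonoidHom η * y p : (Op K p)ˣ) : Op K p))) ∧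
    Ideal.span {w ^ h * w₀} ≠ Ideal.span {σ (w ^ h * w₀)} ∧
    ‖((w : ↥K) : ℂ)‖ ≤ t}

/-- `N_ω(q, t)`, the cardinality of `NSet`. -/
noncomputable def Ncount (P : Finset Nat.Primes) (h : ℕ) (w₀ : 𝓞 ↥K)
    (σ : 𝓞 ↥K ≃+* 𝓞 ↥K) (y : (p : Nat.Primes) → (Op K p)ˣ)
    (q : ℕ) (t : ℝ) : ℕ :=
  (NSet K P h w₀ σ y q t).ncard

/-- The set counted by `M(q, t)`: pairs of rational integers `(u, v)` with
`uβ_p − vα_p ∈ qℤ_p` and `uβ_p − vα_p ≠ 0` for every `p ∈ P`, and `|u|, |v| ≤ t`. -/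
def MSet (P : Finset Nat.Primes) (α β : (p : Nat.Primes) → ℤ_[(p : ℕ)])
    (q : ℕ) (t : ℝ) : Set (ℤ × ℤ) :=
  {uv : ℤ × ℤ |
    (∀ p ∈ P, (q : ℤ_[(p : ℕ)]) ∣
      ((uv.1 : ℤ_[(p : ℕ)]) * β p - (uv.2 : ℤ_[(p : ℕ)]) * α p)) ∧
    (∀ p ∈ P, (uv.1 : ℤ_[(p : ℕ)]) * β p - (uv.2 : ℤ_[(p : ℕ)]) * α p ≠ 0) ∧
    (|uv.1| : ℝ) ≤ t ∧ (|uv.2| : ℝ) ≤ t}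

/-- `M(q, t)`, the cardinality of `MSet`. -/
noncomputable def Mcount (P : Finset Nat.Primes) (α β : (p : Nat.Primes) → ℤ_[(p : ℕ)])
    (q : ℕ) (t : ℝ) : ℕ :=
  (MSet P α β q t).ncard

/-!
A point `w = u + vτ` of `N_ω(q, t)` satisfies, for each `p ∈ P`, `w ≡ η ω_p x_p (mod q O_p)`
with `η ∈ ℤ_pˣ`. Reading off coordinates in the `ℤ_p`-basis `{1, τ}` of `O_p` gives
`u ≡ η α_p`, `v ≡ η β_p (mod q)`, hence `q ∣ uβ_p − vα_p`. If `uβ_p − vα_p` vanished, a nonzero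
`ℤ_p`-multiple of `w` would be a `ℤ_p`-multiple of `ω_p x_p`; as `(ω_p x_p)^h w₀` has a power in
`ℤ_pˣ`, some power of `w^h w₀` would have zero `τ`-coordinate, i.e. lie in `ℤ`. It would then be
fixed by complex conjugation, and unique factorisation of ideals would force
`w^h w₀ O = conj(w^h w₀) O`. The bounds on `u, v` come from the definition of `k`, and
`w ↦ (u, v)` is injective because `{1, τ}` is a basis.
-/

open scoped TensorProduct

section IntBasis

variable {A R : Type*} [CommRing A] [CommRing R] {τ : A}

theorem one_tmul_mul_one_tmul_add_tmul (c a b : R) :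
    ((1 : A) ⊗ₜ[ℤ] c) * ((1 : A) ⊗ₜ a + τ ⊗ₜ b) = (1 : A) ⊗ₜ (c * a) + τ ⊗ₜ (c * b) := by
  simp [mul_add, Algebra.TensorProduct.tmul_mul_tmul]

theorem intCast_add_intCast_mul_tmul (u v : ℤ) (γ : R) :
    ((u : A) + (v : A) * τ) ⊗ₜ[ℤ] γ = (1 : A) ⊗ₜ ((u : R) * γ) + τ ⊗ₜ ((v : R) * γ) := by
  rw [TensorProduct.add_tmul, ← zsmul_one, ← zsmul_eq_mul, TensorProduct.smul_tmul,
    TensorProduct.smul_tmul, zsmul_eq_mul, zsmul_eq_mul]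

theorem exists_tmul_eq_one_tmul_mul {α β : R} (hαβ : α ≠ 0 ∨ β ≠ 0) {u v : ℤ}
    (h : (u : R) * β = (v : R) * α) :
    ∃ γ r : R, γ ≠ 0 ∧
      ((u : A) + (v : A) * τ) ⊗ₜ[ℤ] γ = ((1 : A) ⊗ₜ r) * ((1 : A) ⊗ₜ α + τ ⊗ₜ β) := by
  simp only [intCast_add_intCast_mul_tmul, one_tmul_mul_one_tmul_add_tmul]
  by_cases hβ : β = 0
  · refine ⟨α, u, hαβ.resolve_right (not_not.2 hβ), ?_⟩
    simp only [hβ, mul_zero] at h ⊢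
    rw [mul_comm, ← h]
  · exact ⟨β, v, hβ, by rw [h, mul_comm (v : R) β]⟩

theorem bijective_intCast_add_intCast_mul
    (hτ : ∀ z : A, ∃! cd : ℤ × ℤ, z = (cd.1 : A) + (cd.2 : A) * τ) :
    Function.Bijective fun cd : ℤ × ℤ => (cd.1 : A) + (cd.2 : A) * τ :=
  ⟨fun _ _ hcd => (hτ _).unique rfl hcd, fun z => (hτ z).exists.imp fun _ h => h.symm⟩

variable (hτ : ∀ z : A, ∃! cd : ℤ × ℤ, z = (cd.1 : A) + (cd.2 : A) * τ)
include hτ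

noncomputable def intPairEquiv : (ℤ × ℤ) ≃ₗ[ℤ] A :=
  LinearEquiv.ofBijective
    ((LinearMap.fst ℤ ℤ ℤ).smulRight (1 : A) + (LinearMap.snd ℤ ℤ ℤ).smulRight τ)
    (by convert bijective_intCast_add_intCast_mul hτ using 2 with cd; simp [zsmul_eq_mul])

theorem intPairEquiv_apply (cd : ℤ × ℤ) :
    intPairEquiv hτ cd = (cd.1 : A) + (cd.2 : A) * τ := by
  simp [intPairEquiv, zsmul_eq_mul]

variable (R) in
noncomputable def tensorPairEquiv : (R × R) ≃+ A ⊗[ℤ] R :=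
  ((TensorProduct.lid ℤ R).symm.prodCongr (TensorProduct.lid ℤ R).symm).toAddEquiv.trans <|
    (TensorProduct.prodLeft ℤ ℤ ℤ ℤ R).symm.toAddEquiv.trans <|
      (TensorProduct.congr (intPairEquiv hτ) (LinearEquiv.refl ℤ R)).toAddEquiv

theorem tensorPairEquiv_apply (a b : R) :
    tensorPairEquiv R hτ (a, b) = (1 : A) ⊗ₜ a + τ ⊗ₜ b := by
  have hsplit : ((1 : ℤ) ⊗ₜ[ℤ] a, (1 : ℤ) ⊗ₜ[ℤ] b)
      = ((1 : ℤ) ⊗ₜ[ℤ] a, (0 : ℤ) ⊗ₜ[ℤ] a) + ((0 : ℤ) ⊗ₜ[ℤ] b, (1 : ℤ) ⊗ₜ[ℤ] b) := by simp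
  change (TensorProduct.congr (intPairEquiv hτ) (LinearEquiv.refl ℤ R))
    ((TensorProduct.prodLeft ℤ ℤ ℤ ℤ R).symm ((1 : ℤ) ⊗ₜ[ℤ] a, (1 : ℤ) ⊗ₜ[ℤ] b)) = _
  rw [hsplit, map_add, TensorProduct.prodLeft_symm_tmul, TensorProduct.prodLeft_symm_tmul, map_add,
    TensorProduct.congr_tmul, TensorProduct.congr_tmul]
  simp [intPairEquiv_apply]

theorem one_tmul_add_tmul_inj {a b a' b' : R} :
    (1 : A) ⊗ₜ[ℤ] a + τ ⊗ₜ b = (1 : A) ⊗ₜ a' + τ ⊗ₜ b' ↔ a = a' ∧ b = b' := by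
  rw [← tensorPairEquiv_apply hτ, ← tensorPairEquiv_apply hτ,
    (tensorPairEquiv R hτ).apply_eq_iff_eq, Prod.mk.injEq]

theorem dvd_of_one_tmul_dvd {c a b : R} (h : (1 : A) ⊗ₜ[ℤ] c ∣ (1 : A) ⊗ₜ a + τ ⊗ₜ b) :
    c ∣ a ∧ c ∣ b := by
  obtain ⟨e, he⟩ := h
  obtain ⟨⟨a', b'⟩, rfl⟩ := (tensorPairEquiv R hτ).surjective e
  rw [tensorPairEquiv_apply, one_tmul_mul_one_tmul_add_tmul, one_tmul_add_tmul_inj hτ] at he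
  exact ⟨⟨a', he.1⟩, ⟨b', he.2⟩⟩

theorem ne_zero_or_ne_zero_of_isUnit [Nontrivial R] {α β : R}
    (h : IsUnit ((1 : A) ⊗ₜ[ℤ] α + τ ⊗ₜ β)) : α ≠ 0 ∨ β ≠ 0 := by
  by_contra! hαβ
  simp only [hαβ, TensorProduct.tmul_zero, add_zero, isUnit_zero_iff] at h
  have : Subsingleton (A ⊗[ℤ] R) := subsingleton_of_zero_eq_one h
  have h10 := (one_tmul_add_tmul_inj hτ (a := (1 : R)) (b := 0) (a' := 0) (b' := 0)).1
    (Subsingleton.elim _ _)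
  exact one_ne_zero h10.1

theorem exists_intCast_eq_of_tmul_eq_one_tmul [IsDomain R] [CharZero R] {z : A} {γ r : R}
    (hγ : γ ≠ 0) (h : z ⊗ₜ[ℤ] γ = (1 : A) ⊗ₜ r) : ∃ m : ℤ, z = m := by
  obtain ⟨⟨c, d⟩, rfl⟩ := (hτ z).exists
  rw [intCast_add_intCast_mul_tmul, ← add_zero ((1 : A) ⊗ₜ[ℤ] r), ← TensorProduct.tmul_zero R τ,
    one_tmul_add_tmul_inj hτ, mul_eq_zero, Int.cast_eq_zero] at h
  obtain ⟨-, hd⟩ := h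
  have hd0 : d = 0 := hd.resolve_right hγ
  exact ⟨c, by simp [hd0]⟩

end IntBasis

theorem Ideal.span_singleton_eq_span_singleton_map_of_pow_eq_intCast {R F : Type*} [CommRing R]
    [IsDedekindDomain R] [FunLike F R R] [RingHomClass F R R] (σ : F) {a : R} {n : ℕ}
    (hn : n ≠ 0) {m : ℤ} (h : a ^ n = m) : Ideal.span {a} = Ideal.span {σ a} :=
  pow_left_injective hn <| by
    simp only [Ideal.span_singleton_pow, ← map_pow, h, map_intCast]

section Completion

variable {K} {p : Nat.Primes}

section
omit [NumberField ↥K]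

theorem incL_mul_incR (z : 𝓞 ↥K) (γ : ℤ_[(p : ℕ)]) : incL K p z * incR K p γ = z ⊗ₜ γ := by
  simp [incL, incR, Algebra.TensorProduct.tmul_mul_tmul]

theorem incR_add_incR_mul_incL (τ : 𝓞 ↥K) (a b : ℤ_[(p : ℕ)]) :
    incR K p a + incR K p b * incL K p τ = (1 : 𝓞 ↥K) ⊗ₜ a + τ ⊗ₜ b := by
  rw [mul_comm, incL_mul_incR]
  rfl

theorem mul_mem_Hp {a b : (Op K p)ˣ} (ha : a ∈ Hp K p) (hb : b ∈ Hp K p) : a * b ∈ Hp K p := by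
  obtain ⟨m, hm, hma⟩ := ha
  obtain ⟨n, hn, hnb⟩ := hb
  refine ⟨m * n, Nat.mul_pos hm hn, ?_⟩
  rw [mul_pow a b, pow_mul, pow_mul']
  exact Subgroup.mul_mem _ (Subgroup.pow_mem _ hma n) (Subgroup.pow_mem _ hnb m)

theorem pow_mem_Hp {a : (Op K p)ˣ} (ha : a ∈ Hp K p) (n : ℕ) : a ^ n ∈ Hp K p := by
  obtain ⟨m, hm, hma⟩ := ha
  exact ⟨m, hm, by rw [← pow_mul, pow_mul']; exact Subgroup.pow_mem _ hma n⟩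

theorem natCast_dvd_cross_of_dvd_sub {τ : 𝓞 ↥K}
    (hτ : ∀ z : 𝓞 ↥K, ∃! cd : ℤ × ℤ, z = (cd.1 : 𝓞 ↥K) + (cd.2 : 𝓞 ↥K) * τ)
    {X : (Op K p)ˣ} {α β : ℤ_[(p : ℕ)]} (hX : (X : Op K p) = incR K p α + incR K p β * incL K p τ)
    {u v : ℤ} {q : ℕ} {η : ℤ_[(p : ℕ)]}
    (h : (q : Op K p) ∣ incL K p ((u : 𝓞 ↥K) + (v : 𝓞 ↥K) * τ) - incR K p η * X) :
    (q : ℤ_[(p : ℕ)]) ∣ (u : ℤ_[(p : ℕ)]) * β - (v : ℤ_[(p : ℕ)]) * α := by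
  have hsub : incL K p ((u : 𝓞 ↥K) + (v : 𝓞 ↥K) * τ) - incR K p η * X
      = incR K p (u - η * α) + incR K p (v - η * β) * incL K p τ := by
    simp only [hX, map_add, map_mul, map_intCast, map_sub]
    ring
  rw [hsub, incR_add_incR_mul_incL, ← map_natCast (incR K p)] at h
  obtain ⟨hu, hv⟩ := dvd_of_one_tmul_dvd hτ h
  have hcross : (u : ℤ_[(p : ℕ)]) * β - v * α = (u - η * α) * β - (v - η * β) * α := by ring
  rw [hcross]
  exact dvd_sub (hu.mul_right _) (hv.mul_right _)

theorem coe_intCast_add_intCast_mul (τ : 𝓞 ↥K) (u v : ℤ) :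
    ((((u : 𝓞 ↥K) + (v : 𝓞 ↥K) * τ : 𝓞 ↥K) : ↥K) : ℂ) = (u : ℝ) + ((τ : ↥K) : ℂ) * (v : ℝ) := by
  simp only [map_add, map_intCast, map_mul, IntermediateField.coe_add, SubringClass.coe_intCast,
    IntermediateField.coe_mul, Complex.ofReal_intCast]
  rw [mul_comm]

end

theorem cross_ne_zero_of_span_ne {τ : 𝓞 ↥K}
    (hτ : ∀ z : 𝓞 ↥K, ∃! cd : ℤ × ℤ, z = (cd.1 : 𝓞 ↥K) + (cd.2 : 𝓞 ↥K) * τ)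
    {X : (Op K p)ˣ} {α β : ℤ_[(p : ℕ)]} (hX : (X : Op K p) = incR K p α + incR K p β * incL K p τ)
    {h : ℕ} {w₀ : 𝓞 ↥K} {u₀ : (Op K p)ˣ} (hu₀ : (u₀ : Op K p) = incL K p w₀)
    (hXH : X ^ h * u₀ ∈ Hp K p) (σ : 𝓞 ↥K ≃+* 𝓞 ↥K) {u v : ℤ}
    (hspan : Ideal.span {((u : 𝓞 ↥K) + (v : 𝓞 ↥K) * τ) ^ h * w₀}
      ≠ Ideal.span {σ (((u : 𝓞 ↥K) + (v : 𝓞 ↥K) * τ) ^ h * w₀)}) :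
    (u : ℤ_[(p : ℕ)]) * β - (v : ℤ_[(p : ℕ)]) * α ≠ 0 := by
  set w : 𝓞 ↥K := (u : 𝓞 ↥K) + (v : 𝓞 ↥K) * τ
  intro hcross
  have hXunit : IsUnit ((1 : 𝓞 ↥K) ⊗ₜ[ℤ] α + τ ⊗ₜ β) := by
    rw [← incR_add_incR_mul_incL, ← hX]
    exact X.isUnit
  obtain ⟨γ, r, hγ, hprop⟩ := exists_tmul_eq_one_tmul_mul (A := 𝓞 ↥K) (τ := τ)
    (ne_zero_or_ne_zero_of_isUnit hτ hXunit) (sub_eq_zero.1 hcross)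
  replace hprop : incL K p w * incR K p γ = incR K p r * X := by
    rw [incL_mul_incR, hX, incR_add_incR_mul_incL]
    exact hprop
  obtain ⟨n, hn, ζ, hζ⟩ := hXH
  replace hζ : incR K p (ζ : ℤ_[(p : ℕ)]) = ((X : Op K p) ^ h * u₀) ^ n := by
    simpa using congrArg Units.val hζ
  have hint : ((w ^ h * w₀) ^ n) ⊗ₜ[ℤ] (γ ^ (h * n)) = (1 : 𝓞 ↥K) ⊗ₜ (r ^ (h * n) * ζ) :=
    calc ((w ^ h * w₀) ^ n) ⊗ₜ[ℤ] (γ ^ (h * n))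
        = ((incL K p w * incR K p γ) ^ h * incL K p w₀) ^ n := by
          rw [← incL_mul_incR]
          simp only [map_pow, map_mul]
          ring
      _ = incR K p (r ^ (h * n)) * ((X : Op K p) ^ h * u₀) ^ n := by
          rw [hprop, ← hu₀, map_pow]
          ring
      _ = (1 : 𝓞 ↥K) ⊗ₜ (r ^ (h * n) * ζ) := by
          rw [← hζ, ← map_mul]
          rfl
  obtain ⟨m, hm⟩ := exists_intCast_eq_of_tmul_eq_one_tmul hτ (pow_ne_zero _ hγ) hint
  exact hspan (Ideal.span_singleton_eq_span_singleton_map_of_pow_eq_intCast σ hn.ne' hm)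

theorem mem_MSet_of_mem_NSet {τ : 𝓞 ↥K}
    (hτ : ∀ z : 𝓞 ↥K, ∃! cd : ℤ × ℤ, z = (cd.1 : 𝓞 ↥K) + (cd.2 : 𝓞 ↥K) * τ)
    {P : Finset Nat.Primes} {h : ℕ} {w₀ : 𝓞 ↥K} {u₀ y : (p : Nat.Primes) → (Op K p)ˣ}
    (hu₀ : ∀ p ∈ P, (u₀ p : Op K p) = incL K p w₀) (hy : ∀ p ∈ P, y p ^ h * u₀ p ∈ Hp K p)
    {α β : (p : Nat.Primes) → ℤ_[(p : ℕ)]}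
    (hαβ : ∀ p ∈ P, (y p : Op K p) = incR K p (α p) + incR K p (β p) * incL K p τ)
    {k : ℝ} (hk₀ : 0 ≤ k) (hk : ∀ a b : ℝ, max |a| |b| ≤ k * ‖(a + ((τ : ↥K) : ℂ) * b : ℂ)‖)
    (σ : 𝓞 ↥K ≃+* 𝓞 ↥K) {q : ℕ} {t : ℝ} {u v : ℤ}
    (hw : (u : 𝓞 ↥K) + (v : 𝓞 ↥K) * τ ∈ NSet K P h w₀ σ y q t) :
    (u, v) ∈ MSet P α β q (k * t) := by
  obtain ⟨hcong, hspan, hnorm⟩ := hw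
  rw [coe_intCast_add_intCast_mul] at hnorm
  have hbound : max |(u : ℝ)| |(v : ℝ)| ≤ k * t :=
    (hk u v).trans (mul_le_mul_of_nonneg_left hnorm hk₀)
  refine ⟨fun p hp => ?_,
    fun p hp => cross_ne_zero_of_span_ne hτ (hαβ p hp) (hu₀ p hp) (hy p hp) σ hspan, ?_, ?_⟩
  · obtain ⟨η, hη⟩ := hcong p hp
    simp only [Units.val_mul, Units.coe_map, RingHom.toMonoidHom_eq_coe, MonoidHom.coe_coe] at hη
    exact natCast_dvd_cross_of_dvd_sub hτ (hαβ p hp) hη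
  · exact_mod_cast (le_max_left _ _).trans hbound
  · exact_mod_cast (le_max_right _ _).trans hbound

end Completion

theorem MSet_finite (P : Finset Nat.Primes) (α β : (p : Nat.Primes) → ℤ_[(p : ℕ)]) (q : ℕ)
    (t : ℝ) : (MSet P α β q t).Finite := by
  refine ((Set.finite_Icc (-⌈t⌉) ⌈t⌉).prod (Set.finite_Icc (-⌈t⌉) ⌈t⌉)).subset ?_
  rintro ⟨u, v⟩ ⟨-, -, hu, hv⟩
  have hu' : |u| ≤ ⌈t⌉ := by exact_mod_cast hu.trans (Int.le_ceil t)
  have hv' : |v| ≤ ⌈t⌉ := by exact_mod_cast hv.trans (Int.le_ceil t)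
  exact ⟨abs_le.mp hu', abs_le.mp hv'⟩

theorem NSet_maps_into_MSet
    (σ : 𝓞 ↥K ≃+* 𝓞 ↥K)
    (h : ℕ)
    -- `{1, τ}` is a `ℤ`-basis of `O`
    (τ : 𝓞 ↥K) (hτ : ∀ z : 𝓞 ↥K, ∃! cd : ℤ × ℤ, z = (cd.1 : 𝓞 ↥K) + (cd.2 : 𝓞 ↥K) * τ)
    (P : Finset Nat.Primes)
    (w₀ : 𝓞 ↥K)
    -- the image of `w₀` in `O_p` is a unit, for each `p ∈ P`
    (u₀ : (p : Nat.Primes) → (Op K p)ˣ) (hu₀ : ∀ p ∈ P, ((u₀ p : Op K p)) = incL K p w₀)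
    -- `x p ∈ S_p` (in particular `S_p` is nonempty), for each `p ∈ P`
    (x : (p : Nat.Primes) → (Op K p)ˣ) (hx : ∀ p ∈ P, (x p) ^ h * u₀ p ∈ Hp K p)
    -- `Ω p` is a finite set of representatives for the cosets `H_p / ℤ_pˣ`
    (Ω : (p : Nat.Primes) → Set (Op K p)ˣ)
    (hΩsub : ∀ p ∈ P, Ω p ⊆ Hp K p)
    (ω : (p : Nat.Primes) → (Op K p)ˣ) (hω : ∀ p ∈ P, ω p ∈ Ω p)
    -- the coordinates of `ω_p x_p` in the basis `{1 ⊗ 1, τ ⊗ 1}` of `O_p` over `ℤ_p`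
    (α β : (p : Nat.Primes) → ℤ_[(p : ℕ)])
    (hαβ : ∀ p ∈ P, ((ω p * x p : (Op K p)ˣ) : Op K p)
      = incR K p (α p) + incR K p (β p) * incL K p τ)
    -- `k` is a norm-comparison constant for the basis `{1, τ}`
    (k : ℝ) (hk₀ : 0 < k)
    (hk : ∀ a b : ℝ, max |a| |b| ≤ k * ‖(a + ((τ : ↥K) : ℂ) * b : ℂ)‖) :
    ∀ (q : ℕ) (t : ℝ), 0 < q → (∀ l : Nat.Primes, (l : ℕ) ∣ q → l ∈ P) → 0 < t →
      (∀ u v : ℤ,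
        ((u : 𝓞 ↥K) + (v : 𝓞 ↥K) * τ) ∈ NSet K P h w₀ σ (fun p => ω p * x p) q t →
          (u, v) ∈ MSet P α β q (k * t)) ∧
      Ncount K P h w₀ σ (fun p => ω p * x p) q t ≤ Mcount P α β q (k * t) := by
  intro q t _ _ _
  have hy : ∀ p ∈ P, (ω p * x p) ^ h * u₀ p ∈ Hp K p := fun p hp => by
    rw [mul_pow (ω p) (x p) h, mul_assoc]
    exact mul_mem_Hp (pow_mem_Hp (hΩsub p hp (hω p hp)) h) (hx p hp)
  have hmem (u v : ℤ) :=
    mem_MSet_of_mem_NSet hτ hu₀ hy hαβ hk₀.le hk σ (q := q) (t := t) (u := u) (v := v)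
  refine ⟨hmem, Set.ncard_le_ncard_of_injOn (intPairEquiv hτ).symm (fun w hw => ?_)
    (intPairEquiv hτ).symm.injective.injOn (MSet_finite P α β q (k * t))⟩
  rw [← (intPairEquiv hτ).apply_symm_apply w, intPairEquiv_apply] at hw
  exact hmem _ _ hw
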